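/- arXiv:2602.10669 — 3 statements merged into one kernel-verified Lean document; each statement's English description precedes it below -/
import Mathlib

section
/- Let (A,∘,∗) be a dual pre-Poisson algebra and R : A → A a Rota–Baxter operator of weight λ. Define new bilinear operations a∘_R b := R(a)∘b + a∘R(b) + λ(a∘b) and a∗_R b := R(a)∗b + a∗R(b) + λ(a∗b). Then (A,∘_R,∗_R) is a dual pre-Poisson algebra, and R is a homomorphism of DPP algebras from (A,∘_R,∗_R) to (A,∘,∗), i.e. R(a∘_R b) = R(a)∘R(b) and R(a∗_R b) = R(a)∗R(b) for all a,b ∈ A. -/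
open TensorProduct LinearMap

/-- The axioms of a dual pre-Poisson (DPP) algebra. -/
structure IsDPP {k A : Type*} [Field k] [AddCommGroup A] [Module k A]
    (c s : A →ₗ[k] A →ₗ[k] A) : Prop where
  perm_assoc : ∀ a b d : A, c a (c b d) = c (c a b) d
  perm_comm : ∀ a b d : A, c (c a b) d = c (c b a) d
  leibniz : ∀ a b d : A, s a (s b d) = s (s a b) d + s b (s a d)
  comp1 : ∀ a b d : A, s (c a b) d = c a (s b d) + c b (s a d)
  comp2 : ∀ a b d : A, c (s a b) d = s a (c b d) - c b (s a d)
  comp3 : ∀ a b d : A, c (s a b) d = - c (s b a) d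

/-! Every identity between trilinear expressions in the operations transfers to the derived
operations: after using `R (x ∘_R y) = R x ∘ R y` once, both `a ∘_R (b ∗_R d)` and
`(a ∗_R b) ∘_R d` expand into the same seven-term combination `RotaBaxter.expand` of the original
expression evaluated at `a`, `b`, `d` with `R` applied to two, one or none of them. -/

namespace RotaBaxter

variable {k A : Type*} [CommRing k] [AddCommGroup A] [Module k A] (R : A →ₗ[k] A) (lam : k)

def derived (μ : A →ₗ[k] A →ₗ[k] A) : A →ₗ[k] A →ₗ[k] A :=
  μ ∘ₗ R + μ.compl₂ R + lam • μ

def IsOperator (μ : A →ₗ[k] A →ₗ[k] A) : Prop :=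
  ∀ a b : A, μ (R a) (R b) = R (μ (R a) b + μ a (R b) + lam • μ a b)

def expand (T : A → A → A → A) (a b d : A) : A :=
  T (R a) (R b) d + T (R a) b (R d) + T a (R b) (R d)
    + lam • (T (R a) b d + T a (R b) d + T a b (R d)) + lam ^ 2 • T a b d

variable {R lam}

@[simp]
theorem derived_apply (μ : A →ₗ[k] A →ₗ[k] A) (a b : A) :
    derived R lam μ a b = μ (R a) b + μ a (R b) + lam • μ a b :=
  rfl

theorem IsOperator.map_derived {μ : A →ₗ[k] A →ₗ[k] A} (hμ : IsOperator R lam μ) (a b : A) :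
    R (derived R lam μ a b) = μ (R a) (R b) :=
  (hμ a b).symm

theorem derived_derived_right (μ : A →ₗ[k] A →ₗ[k] A) {ν : A →ₗ[k] A →ₗ[k] A}
    (hν : IsOperator R lam ν) (a b d : A) :
    derived R lam μ a (derived R lam ν b d) = expand R lam (fun a b d => μ a (ν b d)) a b d := by
  rw [derived_apply, hν.map_derived, expand]
  simp only [derived_apply, map_add, map_smul]
  module

theorem derived_derived_left (μ : A →ₗ[k] A →ₗ[k] A) {ν : A →ₗ[k] A →ₗ[k] A}
    (hν : IsOperator R lam ν) (a b d : A) :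
    derived R lam μ (derived R lam ν a b) d = expand R lam (fun a b d => μ (ν a b) d) a b d := by
  rw [derived_apply, hν.map_derived, expand]
  simp only [derived_apply, map_add, map_smul, LinearMap.add_apply, LinearMap.smul_apply]
  module

theorem expand_swap (T : A → A → A → A) (a b d : A) :
    expand R lam T b a d = expand R lam (fun a b d => T b a d) a b d := by
  simp only [expand]
  module

theorem derived_derived_right_swap (μ : A →ₗ[k] A →ₗ[k] A) {ν : A →ₗ[k] A →ₗ[k] A}
    (hν : IsOperator R lam ν) (a b d : A) :
    derived R lam μ b (derived R lam ν a d) = expand R lam (fun a b d => μ b (ν a d)) a b d :=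
  (derived_derived_right μ hν b a d).trans (expand_swap _ a b d)

theorem derived_derived_left_swap (μ : A →ₗ[k] A →ₗ[k] A) {ν : A →ₗ[k] A →ₗ[k] A}
    (hν : IsOperator R lam ν) (a b d : A) :
    derived R lam μ (derived R lam ν b a) d = expand R lam (fun a b d => μ (ν b a) d) a b d :=
  (derived_derived_left μ hν b a d).trans (expand_swap _ a b d)

section Transfer

variable {T T₁ T₂ : A → A → A → A} (a b d : A)

theorem expand_congr (hT : ∀ a b d, T a b d = T₁ a b d) :
    expand R lam T a b d = expand R lam T₁ a b d := by
  simp only [expand, hT]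

theorem expand_eq_add (hT : ∀ a b d, T a b d = T₁ a b d + T₂ a b d) :
    expand R lam T a b d = expand R lam T₁ a b d + expand R lam T₂ a b d := by
  simp only [expand, hT]
  module

theorem expand_eq_sub (hT : ∀ a b d, T a b d = T₁ a b d - T₂ a b d) :
    expand R lam T a b d = expand R lam T₁ a b d - expand R lam T₂ a b d := by
  simp only [expand, hT]
  module

theorem expand_eq_neg (hT : ∀ a b d, T a b d = -T₁ a b d) :
    expand R lam T a b d = -expand R lam T₁ a b d := by
  simp only [expand, hT]
  module

end Transfer

end RotaBaxter

open RotaBaxter in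
theorem IsDPP.rotaBaxterDerived {k A : Type*} [Field k] [AddCommGroup A] [Module k A]
    {c s : A →ₗ[k] A →ₗ[k] A} (h : IsDPP c s) {R : A →ₗ[k] A} {lam : k}
    (hc : IsOperator R lam c) (hs : IsOperator R lam s) :
    IsDPP (derived R lam c) (derived R lam s) where
  perm_assoc a b d := by
    rw [derived_derived_right c hc, derived_derived_left c hc]
    exact expand_congr a b d h.perm_assoc
  perm_comm a b d := by
    rw [derived_derived_left c hc, derived_derived_left_swap c hc]
    exact expand_congr a b d h.perm_comm
  leibniz a b d := by
    rw [derived_derived_right s hs, derived_derived_left s hs, derived_derived_right_swap s hs]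
    exact expand_eq_add a b d h.leibniz
  comp1 a b d := by
    rw [derived_derived_left s hc, derived_derived_right c hs, derived_derived_right_swap c hs]
    exact expand_eq_add a b d h.comp1
  comp2 a b d := by
    rw [derived_derived_left c hs, derived_derived_right s hc, derived_derived_right_swap c hs]
    exact expand_eq_sub a b d h.comp2
  comp3 a b d := by
    rw [derived_derived_left c hs, derived_derived_left_swap c hs]
    exact expand_eq_neg a b d h.comp3

theorem stmt1_general {k A : Type*} [Field k] [AddCommGroup A] [Module k A]
    (c s : A →ₗ[k] A →ₗ[k] A) (h : IsDPP c s) (R : A →ₗ[k] A) (lam : k)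
    (hRB1 : ∀ a b : A, c (R a) (R b) = R (c (R a) b + c a (R b) + lam • c a b))
    (hRB2 : ∀ a b : A, s (R a) (R b) = R (s (R a) b + s a (R b) + lam • s a b)) :
    IsDPP (c ∘ₗ R + c.compl₂ R + lam • c) (s ∘ₗ R + s.compl₂ R + lam • s) ∧
    (∀ a b : A, R ((c ∘ₗ R + c.compl₂ R + lam • c) a b) = c (R a) (R b)) ∧
    (∀ a b : A, R ((s ∘ₗ R + s.compl₂ R + lam • s) a b) = s (R a) (R b)) :=
  ⟨h.rotaBaxterDerived hRB1 hRB2, RotaBaxter.IsOperator.map_derived hRB1,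
    RotaBaxter.IsOperator.map_derived hRB2⟩

/-- If `R` is a Rota–Baxter operator of weight `λ` on a DPP algebra `(A, ∘, ∗)`, then
the derived operations `a ∘_R b = R(a)∘b + a∘R(b) + λ(a∘b)` and
`a ∗_R b = R(a)∗b + a∗R(b) + λ(a∗b)` again form a DPP algebra, and `R` is a homomorphism
of DPP algebras from `(A, ∘_R, ∗_R)` to `(A, ∘, ∗)`. -/
theorem stmt1 {k A : Type*} [Field k] [CharZero k] [AddCommGroup A] [Module k A]
    (c s : A →ₗ[k] A →ₗ[k] A) (h : IsDPP c s) (R : A →ₗ[k] A) (lam : k)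
    (hRB1 : ∀ a b : A, c (R a) (R b) = R (c (R a) b + c a (R b) + lam • c a b))
    (hRB2 : ∀ a b : A, s (R a) (R b) = R (s (R a) b + s a (R b) + lam • s a b)) :
    IsDPP (c ∘ₗ R + c.compl₂ R + lam • c) (s ∘ₗ R + s.compl₂ R + lam • s) ∧
    (∀ a b : A, R ((c ∘ₗ R + c.compl₂ R + lam • c) a b) = c (R a) (R b)) ∧
    (∀ a b : A, R ((s ∘ₗ R + s.compl₂ R + lam • s) a b) = s (R a) (R b)) :=
  stmt1_general c s h R lam hRB1 hRB2
end

section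
/- Let (P,·,[−,−]) be a finite-dimensional Poisson algebra and (B = ⊕_{i∈ℤ} B_i, ∘_B) a ℤ-graded perm algebra, i.e. each B_i is finite-dimensional and B_i ∘_B B_j ⊆ B_{i+j} for all i,j ∈ ℤ. Then P⊗B, equipped with the bilinear operations determined by (p⊗b)∘(q⊗c) = (p·q)⊗(b∘_B c) and (p⊗b)∗(q⊗c) = [p,q]⊗(b∘_B c), is a ℤ-graded dual pre-Poisson algebra with grading (P⊗B)_i = P⊗B_i: it is a DPP algebra and (P⊗B_i)∘(P⊗B_j) ⊆ P⊗B_{i+j} and (P⊗B_i)∗(P⊗B_j) ⊆ P⊗B_{i+j} for all i,j ∈ ℤ. -/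
open TensorProduct LinearMap

structure IsPoisson {k P : Type*} [Field k] [AddCommGroup P] [Module k P]
    (m br : P →ₗ[k] P →ₗ[k] P) : Prop where
  mul_comm : ∀ p q : P, m p q = m q p
  mul_assoc : ∀ p q u : P, m p (m q u) = m (m p q) u
  br_antisymm : ∀ p q : P, br p q = - br q p
  jacobi : ∀ p q u : P, br p (br q u) + br q (br u p) + br u (br p q) = 0
  leibniz : ∀ p q u : P, br p (m q u) = m (br p q) u + m q (br p u)

/-! Each DPP axiom is a trilinear identity, so it suffices to check it on pure tensors
`p ⊗ b, q ⊗ c, u ⊗ d`. The perm axioms make all the products `b(cd)`, `(bc)d`, `c(bd)`,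
`(cb)d` of `B` coincide, so on pure tensors each DPP axiom becomes a Poisson identity in `P`
tensored with the single element `(bc)d`. Grading is preserved because the `B`-factor of a
product of pure tensors is a product in `B`. -/

namespace IsPoisson

variable {k P : Type*} [Field k] [AddCommGroup P] [Module k P] {m br : P →ₗ[k] P →ₗ[k] P}

theorem br_mul (hP : IsPoisson m br) (p q u : P) :
    br (m p q) u = m p (br q u) + m q (br p u) := by
  rw [hP.br_antisymm, hP.leibniz, hP.br_antisymm u p, hP.br_antisymm u q]
  simp only [map_neg, LinearMap.neg_apply]
  rw [hP.mul_comm (br p u)]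
  abel

theorem br_br (hP : IsPoisson m br) (p q u : P) :
    br p (br q u) = br (br p q) u + br q (br p u) := by
  have hj := hP.jacobi p q u
  rw [hP.br_antisymm u p, hP.br_antisymm u (br p q)] at hj
  simp only [map_neg] at hj
  rw [← sub_eq_zero, ← hj]
  abel

end IsPoisson

section Nested

variable {R V : Type*} [CommSemiring R] [AddCommMonoid V] [Module R V]

def rightNested (μ ν : V →ₗ[R] V →ₗ[R] V) : V →ₗ[R] V →ₗ[R] V →ₗ[R] V :=
  ((llcomp R V V V).comp μ).compl₂ ν

def leftNested (μ ν : V →ₗ[R] V →ₗ[R] V) : V →ₗ[R] V →ₗ[R] V →ₗ[R] V :=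
  ν.compr₂ μ

@[simp]
theorem rightNested_apply (μ ν : V →ₗ[R] V →ₗ[R] V) (x y z : V) :
    rightNested μ ν x y z = μ x (ν y z) := rfl

@[simp]
theorem leftNested_apply (μ ν : V →ₗ[R] V →ₗ[R] V) (x y z : V) :
    leftNested μ ν x y z = μ (ν x y) z := rfl

end Nested

theorem TensorProduct.ext₃' {R M N Q : Type*} [CommSemiring R] [AddCommMonoid M] [Module R M]
    [AddCommMonoid N] [Module R N] [AddCommMonoid Q] [Module R Q]
    {f g : M ⊗[R] N →ₗ[R] M ⊗[R] N →ₗ[R] M ⊗[R] N →ₗ[R] Q}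
    (h : ∀ (p q u : M) (b c d : N),
      f (p ⊗ₜ b) (q ⊗ₜ c) (u ⊗ₜ d) = g (p ⊗ₜ b) (q ⊗ₜ c) (u ⊗ₜ d)) :
    f = g :=
  ext' fun _ _ ↦ ext' fun _ _ ↦ ext' fun _ _ ↦ h ..

section TensorPerm

variable {k P B : Type*} [Field k] [AddCommGroup P] [Module k P] [AddCommGroup B] [Module k B]
  {m br : P →ₗ[k] P →ₗ[k] P} {cB : B →ₗ[k] B →ₗ[k] B}

theorem perm_left_comm
    (hB : ∀ b c d : B, cB b (cB c d) = cB (cB b c) d ∧ cB (cB b c) d = cB (cB c b) d)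
    (b c d : B) : cB c (cB b d) = cB (cB b c) d := by
  rw [(hB c b d).1, ← (hB b c d).2]

theorem isDPP_tensorProduct (hP : IsPoisson m br)
    (hB : ∀ b c d : B, cB b (cB c d) = cB (cB b c) d ∧ cB (cB b c) d = cB (cB c b) d)
    {circ star : P ⊗[k] B →ₗ[k] P ⊗[k] B →ₗ[k] P ⊗[k] B}
    (hcirc : ∀ (p q : P) (b c : B), circ (p ⊗ₜ b) (q ⊗ₜ c) = m p q ⊗ₜ cB b c)
    (hstar : ∀ (p q : P) (b c : B), star (p ⊗ₜ b) (q ⊗ₜ c) = br p q ⊗ₜ cB b c) :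
    IsDPP circ star where
  perm_assoc a b d := by
    simpa using congr($(ext₃' (f := rightNested circ circ) (g := leftNested circ circ)
      fun p q u b c d ↦ by simp [hcirc, hP.mul_assoc, (hB b c d).1]) a b d)
  perm_comm a b d := by
    simpa using congr($(ext₃' (f := leftNested circ circ) (g := (leftNested circ circ).flip)
      fun p q u b c d ↦ by simp [hcirc, hP.mul_comm p q, (hB b c d).2]) a b d)
  leibniz a b d := by
    simpa using congr($(ext₃' (f := rightNested star star)
      (g := leftNested star star + (rightNested star star).flip)
      fun p q u b c d ↦ by
        simp only [rightNested_apply, leftNested_apply, flip_apply, LinearMap.add_apply, hstar]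
        rw [hP.br_br, add_tmul, (hB b c d).1, perm_left_comm hB b c d]) a b d)
  comp1 a b d := by
    simpa using congr($(ext₃' (f := leftNested star circ)
      (g := rightNested circ star + (rightNested circ star).flip)
      fun p q u b c d ↦ by
        simp [hstar, hcirc, hP.br_mul, add_tmul, (hB b c d).1, perm_left_comm hB b c d]) a b d)
  comp2 a b d := by
    refine eq_sub_of_add_eq ?_
    simpa using congr($(ext₃' (f := leftNested circ star + (rightNested circ star).flip)
      (g := rightNested star circ)
      fun p q u b c d ↦ by
        simp [hstar, hcirc, hP.leibniz, add_tmul, (hB b c d).1, perm_left_comm hB b c d]) a b d)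
  comp3 a b d := by
    refine eq_neg_of_add_eq_zero_left ?_
    simpa using congr($(ext₃' (f := leftNested circ star + (leftNested circ star).flip) (g := 0)
      fun p q u b c d ↦ by
        simp [hstar, hcirc, hP.br_antisymm p q, (hB b c d).2, neg_tmul]) a b d)

end TensorPerm

theorem apply_mem_range_map_subtype {k P B : Type*} [Field k] [AddCommGroup P] [Module k P]
    [AddCommGroup B] [Module k B] {op : P →ₗ[k] P →ₗ[k] P} {cB : B →ₗ[k] B →ₗ[k] B}
    {F : P ⊗[k] B →ₗ[k] P ⊗[k] B →ₗ[k] P ⊗[k] B}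
    (hF : ∀ (p q : P) (b c : B), F (p ⊗ₜ b) (q ⊗ₜ c) = op p q ⊗ₜ cB b c)
    {S T U : Submodule k B} (hST : ∀ b c, b ∈ S → c ∈ T → cB b c ∈ U) {x y : P ⊗[k] B}
    (hx : x ∈ range (map (id (M := P)) S.subtype))
    (hy : y ∈ range (map (id (M := P)) T.subtype)) :
    F x y ∈ range (map (id (M := P)) U.subtype) := by
  obtain ⟨x, rfl⟩ := hx
  obtain ⟨y, rfl⟩ := hy
  induction x using TensorProduct.induction_on with
  | zero => simp
  | add x₁ x₂ h₁ h₂ => simpa only [map_add, LinearMap.add_apply] using add_mem h₁ h₂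
  | tmul p b =>
    induction y using TensorProduct.induction_on with
    | zero => simp
    | add y₁ y₂ h₁ h₂ => simpa only [map_add] using add_mem h₁ h₂
    | tmul q c =>
      rw [map_tmul, map_tmul, hF]
      exact ⟨op p q ⊗ₜ ⟨cB b c, hST b c b.2 c.2⟩, rfl⟩

theorem stmt3_general {k P B : Type*} [Field k]
    [AddCommGroup P] [Module k P]
    [AddCommGroup B] [Module k B]
    (m br : P →ₗ[k] P →ₗ[k] P) (hP : IsPoisson m br)
    (cB : B →ₗ[k] B →ₗ[k] B)
    (hB : ∀ b c d : B, cB b (cB c d) = cB (cB b c) d ∧ cB (cB b c) d = cB (cB c b) d)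
    (Bsub : ℤ → Submodule k B)
    (hgraded : ∀ (i j : ℤ) (b c : B), b ∈ Bsub i → c ∈ Bsub j → cB b c ∈ Bsub (i + j))
    (circ star : P ⊗[k] B →ₗ[k] P ⊗[k] B →ₗ[k] P ⊗[k] B)
    (hcirc : ∀ (p q : P) (b c : B),
      circ (p ⊗ₜ[k] b) (q ⊗ₜ[k] c) = (m p q) ⊗ₜ[k] (cB b c))
    (hstar : ∀ (p q : P) (b c : B),
      star (p ⊗ₜ[k] b) (q ⊗ₜ[k] c) = (br p q) ⊗ₜ[k] (cB b c)) :
    IsDPP circ star ∧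
    (∀ (i j : ℤ) (x y : P ⊗[k] B),
      x ∈ LinearMap.range (TensorProduct.map (LinearMap.id (M := P)) (Bsub i).subtype) →
      y ∈ LinearMap.range (TensorProduct.map (LinearMap.id (M := P)) (Bsub j).subtype) →
      circ x y ∈
        LinearMap.range (TensorProduct.map (LinearMap.id (M := P)) (Bsub (i + j)).subtype) ∧
      star x y ∈
        LinearMap.range (TensorProduct.map (LinearMap.id (M := P)) (Bsub (i + j)).subtype)) :=
  ⟨isDPP_tensorProduct hP hB hcirc hstar, fun i j _ _ hx hy ↦
    ⟨apply_mem_range_map_subtype hcirc (hgraded i j) hx hy,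
      apply_mem_range_map_subtype hstar (hgraded i j) hx hy⟩⟩

/-- The tensor product of a finite-dimensional Poisson algebra and a ℤ-graded perm
algebra is a ℤ-graded dual pre-Poisson algebra with grading `(P⊗B)_i = P ⊗ B_i`:
it is a DPP algebra and `(P⊗B_i)∘(P⊗B_j) ⊆ P⊗B_{i+j}`,
`(P⊗B_i)∗(P⊗B_j) ⊆ P⊗B_{i+j}` for all `i j : ℤ`. -/
theorem stmt3 {k P B : Type*} [Field k] [CharZero k]
    [AddCommGroup P] [Module k P] [FiniteDimensional k P]
    [AddCommGroup B] [Module k B]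
    (m br : P →ₗ[k] P →ₗ[k] P) (hP : IsPoisson m br)
    (cB : B →ₗ[k] B →ₗ[k] B)
    (hB : ∀ b c d : B, cB b (cB c d) = cB (cB b c) d ∧ cB (cB b c) d = cB (cB c b) d)
    (Bsub : ℤ → Submodule k B)
    (hinternal : DirectSum.IsInternal Bsub)
    (hfd : ∀ i : ℤ, FiniteDimensional k (Bsub i))
    (hgraded : ∀ (i j : ℤ) (b c : B), b ∈ Bsub i → c ∈ Bsub j → cB b c ∈ Bsub (i + j))
    (circ star : P ⊗[k] B →ₗ[k] P ⊗[k] B →ₗ[k] P ⊗[k] B)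
    (hcirc : ∀ (p q : P) (b c : B),
      circ (p ⊗ₜ[k] b) (q ⊗ₜ[k] c) = (m p q) ⊗ₜ[k] (cB b c))
    (hstar : ∀ (p q : P) (b c : B),
      star (p ⊗ₜ[k] b) (q ⊗ₜ[k] c) = (br p q) ⊗ₜ[k] (cB b c)) :
    IsDPP circ star ∧
    (∀ (i j : ℤ) (x y : P ⊗[k] B),
      x ∈ LinearMap.range (TensorProduct.map (LinearMap.id (M := P)) (Bsub i).subtype) →
      y ∈ LinearMap.range (TensorProduct.map (LinearMap.id (M := P)) (Bsub j).subtype) →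
      circ x y ∈
        LinearMap.range (TensorProduct.map (LinearMap.id (M := P)) (Bsub (i + j)).subtype) ∧
      star x y ∈
        LinearMap.range (TensorProduct.map (LinearMap.id (M := P)) (Bsub (i + j)).subtype)) :=
  stmt3_general m br hP cB hB Bsub hgraded circ star hcirc hstar
end

section
/- Let (P,·,[−,−]) be a Poisson algebra and α : P → P an averaging operator, i.e. a linear map with [α(p),α(q)] = α([α(p),q]) and α(p)·α(q) = α(α(p)·q) = α(p·α(q)) for all p,q ∈ P. Define p∘q := α(p)·q and p∗q := [α(p), q]. Then (P,∘,∗) is a dual pre-Poisson algebra. -/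
open TensorProduct LinearMap

/-- If `α` is an averaging operator on a Poisson algebra `(P, ·, [−,−])`, then
`p∘q := α(p)·q` and `p∗q := [α(p), q]` define a dual pre-Poisson algebra. -/
theorem stmt5 {k P : Type*} [Field k] [CharZero k] [AddCommGroup P] [Module k P]
    (m br : P →ₗ[k] P →ₗ[k] P) (h : IsPoisson m br) (α : P →ₗ[k] P)
    (hav1 : ∀ p q : P, br (α p) (α q) = α (br (α p) q))
    (hav2 : ∀ p q : P, m (α p) (α q) = α (m (α p) q))
    (hav3 : ∀ p q : P, m (α p) (α q) = α (m p (α q))) :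
    IsDPP (m ∘ₗ α) (br ∘ₗ α) := by
  constructor
  · intro a b d
    simp only [comp_apply]
    rw [← hav2, h.mul_assoc]
  · intro a b d
    simp only [comp_apply]
    rw [← hav2, ← hav2, h.mul_comm (α a) (α b)]
  · intro a b d
    simp only [comp_apply]
    rw [← hav1]
    have j := h.jacobi (α a) (α b) d
    rw [h.br_antisymm d (α a), h.br_antisymm d (br (α a) (α b)), map_neg] at j
    rw [add_neg_eq_zero] at j
    rw [← j]
    abel
  · intro a b d
    simp only [comp_apply]
    rw [← hav2, h.br_antisymm (m (α a) (α b)) d, h.leibniz,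
      h.br_antisymm d (α a), h.br_antisymm d (α b)]
    simp only [map_neg, LinearMap.neg_apply, neg_add, neg_neg]
    rw [h.mul_comm (br (α a) d) (α b)]
    abel
  · intro a b d
    simp only [comp_apply]
    rw [← hav1, h.leibniz]
    abel
  · intro a b d
    simp only [comp_apply]
    rw [← hav1, ← hav1, h.br_antisymm (α a) (α b)]
    simp
end
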